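/- arXiv:1206.3563 — 5 statements merged into one kernel-verified Lean document; each statement's English description precedes it below -/
import Mathlib

section
/- Let F be a Riemannian map from a Riemannian manifold (M₁,g₁) to a Riemannian manifold (M₂,g₂). Then for all horizontal vector fields X, Y, Z (i.e., sections of (ker F_*)^⊥), the second fundamental form satisfies g₂((∇F_*)(X,Y), F_*(Z)) = 0; equivalently, (∇F_*)(X,Y) takes values in (range F_*)^⊥. -/
/-!
Write `S(X,Y,Z) = g₂((∇F_*)(X,Y), F_*Z)`. Differentiating the Riemannian-map identity
`g₂(F_*Y, F_*Z) = g₁(Y, Z)` along `X` and using metric compatibility of both connections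
shows that `S` is antisymmetric in its last two (horizontal) arguments, while the second
fundamental form is symmetric in its first two. Any function of three arguments with these
two symmetries satisfies `S = -S`; since `S` is additive in `Z`, halving `Z` then gives
`S = 0` without dividing by `2` in the ring of functions.
-/

theorem add_self_eq_zero_of_symm_of_antisymm {V C : Type*} [AddCommGroup C] (P : Set V)
    (S : V → V → V → C)
    (hsymm : ∀ a ∈ P, ∀ b ∈ P, ∀ c ∈ P, S a b c = S b a c)
    (hanti : ∀ a ∈ P, ∀ b ∈ P, ∀ c ∈ P, S a b c = -S a c b)
    {x y z : V} (hx : x ∈ P) (hy : y ∈ P) (hz : z ∈ P) :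
    S x y z + S x y z = 0 := by
  refine add_eq_zero_iff_eq_neg.mpr ?_
  calc S x y z = -S x z y := hanti x hx y hy z hz
    _ = -S z x y := by rw [hsymm x hx z hz y hy]
    _ = S z y x := by rw [hanti z hz x hx y hy, neg_neg]
    _ = S y z x := hsymm z hz y hy x hx
    _ = -S y x z := hanti y hy z hz x hx
    _ = -S x y z := by rw [hsymm y hy x hx z hz]

theorem eq_zero_of_add_self_eq_zero {k V C : Type*} [Semiring k] [Invertible (2 : k)]
    [AddCommMonoid V] [Module k V] [AddCommMonoid C] (P : Submodule k V) (f : V →+ C)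
    (h : ∀ w ∈ P, f w + f w = 0) {z : V} (hz : z ∈ P) : f z = 0 :=
  calc f z = f (⅟2 • z) + f (⅟2 • z) := by rw [← map_add, invOf_two_smul_add_invOf_two_smul]
    _ = 0 := h _ (P.smul_mem _ hz)

section SecondFundamentalForm

variable {C : Type*} [CommRing C] {VF₁ VF₂ : Type*} [AddCommGroup VF₂]

def secondFundamentalForm (Fstar : VF₁ → VF₂) (nab1 : VF₁ → VF₁ → VF₁)
    (nabF : VF₁ → VF₂ → VF₂) (x y : VF₁) : VF₂ :=
  nabF x (Fstar y) - Fstar (nab1 x y)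

theorem secondFundamentalForm_inner_eq_neg_swap
    (g₁ : VF₁ → VF₁ → C) (g₂ : VF₂ → VF₂ → C) (Fstar : VF₁ → VF₂) (D : VF₁ → C → C)
    (nab1 : VF₁ → VF₁ → VF₁) (nabF : VF₁ → VF₂ → VF₂) (Hor : Set VF₁)
    (hg₁symm : ∀ x y, g₁ x y = g₁ y x)
    (hg₂symm : ∀ s t, g₂ s t = g₂ t s)
    (hg₂subl : ∀ s t u, g₂ (s - t) u = g₂ s u - g₂ t u)
    (hriem : ∀ x : VF₁, ∀ z ∈ Hor, g₂ (Fstar x) (Fstar z) = g₁ x z)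
    (hcomp1 : ∀ x y z, D x (g₁ y z) = g₁ (nab1 x y) z + g₁ y (nab1 x z))
    (hcompF : ∀ x s t, D x (g₂ s t) = g₂ (nabF x s) t + g₂ s (nabF x t))
    (x : VF₁) {y z : VF₁} (hy : y ∈ Hor) (hz : z ∈ Hor) :
    g₂ (secondFundamentalForm Fstar nab1 nabF x y) (Fstar z)
      = -g₂ (secondFundamentalForm Fstar nab1 nabF x z) (Fstar y) := by
  have hD : D x (g₂ (Fstar y) (Fstar z)) = D x (g₁ y z) := by rw [hriem y z hz]
  rw [hcompF, hcomp1] at hD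
  simp only [secondFundamentalForm, hg₂subl, hriem _ _ hy, hriem _ _ hz]
  linear_combination hD + hg₂symm (nabF x (Fstar z)) (Fstar y) - hg₁symm (nab1 x z) y

end SecondFundamentalForm

/-- The connections, metrics and `F_*` act on the module `VF₁` of vector fields on `M₁` and
the module `VF₂` of sections of `F⁻¹TM₂`, with values in the ring `C` of smooth functions;
`D X` is differentiation along `X` and `Hor = Γ((ker F_*)^⊥)`. -/
theorem sff_range_perp_general
    {C : Type*} [CommRing C]
    {VF₁ VF₂ : Type*} [AddCommGroup VF₁] [Module ℝ VF₁] [AddCommGroup VF₂] [Module ℝ VF₂]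
    (g₁ : VF₁ → VF₁ → C) (g₂ : VF₂ → VF₂ → C)
    (Fstar : VF₁ →ₗ[ℝ] VF₂)
    (D : VF₁ → C → C)
    (nab1 : VF₁ → VF₁ → VF₁) (nabF : VF₁ → VF₂ → VF₂)
    (Hor : Submodule ℝ VF₁)
    (hg₁symm : ∀ x y, g₁ x y = g₁ y x)
    (hg₂symm : ∀ s t, g₂ s t = g₂ t s)
    (hg₂addl : ∀ s t u, g₂ (s + t) u = g₂ s u + g₂ t u)
    (hg₂subl : ∀ s t u, g₂ (s - t) u = g₂ s u - g₂ t u)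
    -- the Riemannian-map property of `F`
    (hriem : ∀ x : VF₁, ∀ z ∈ Hor, g₂ (Fstar x) (Fstar z) = g₁ x z)
    -- metric compatibility of the Levi-Civita connection of `M₁`
    (hcomp1 : ∀ x y z, D x (g₁ y z) = g₁ (nab1 x y) z + g₁ y (nab1 x z))
    -- metric compatibility of the pullback connection
    (hcompF : ∀ x s t, D x (g₂ s t) = g₂ (nabF x s) t + g₂ s (nabF x t))
    -- symmetry of the second fundamental form of `F`
    (hsffsymm : ∀ x y, nabF x (Fstar y) - Fstar (nab1 x y)
        = nabF y (Fstar x) - Fstar (nab1 y x)) :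
    ∀ x ∈ Hor, ∀ y ∈ Hor, ∀ z ∈ Hor,
      g₂ (nabF x (Fstar y) - Fstar (nab1 x y)) (Fstar z) = 0 := by
  intro x hx y hy z hz
  let sff := secondFundamentalForm Fstar nab1 nabF
  let pairing : VF₁ →+ C := AddMonoidHom.mk' (fun c => g₂ (sff x y) (Fstar c)) fun a b => by
    simp only [map_add, hg₂symm (sff x y), hg₂addl]
  refine eq_zero_of_add_self_eq_zero Hor pairing (fun w hw => ?_) hz
  exact add_self_eq_zero_of_symm_of_antisymm (Hor : Set VF₁)
    (fun a b c => g₂ (sff a b) (Fstar c))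
    (fun a _ b _ c _ => congrArg (g₂ · (Fstar c)) (hsffsymm a b))
    (fun a _ b hb c hc => secondFundamentalForm_inner_eq_neg_swap g₁ g₂ Fstar D nab1 nabF Hor
      hg₁symm hg₂symm hg₂subl hriem hcomp1 hcompF a hb hc)
    hx hy hw

/-- Lemma 2.1: for a Riemannian map `F : (M₁,g₁) → (M₂,g₂)`, the second
fundamental form `(∇F_*)(X,Y) = ∇^F_X F_*Y − F_*(∇^{M₁}_X Y)` satisfies
`g₂((∇F_*)(X,Y), F_*Z) = 0` for all horizontal `X, Y, Z`; i.e. `(∇F_*)(X,Y)` takes values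
in `(range F_*)^⊥`.

The geometric situation is modelled algebraically: `VF₁` is the module of vector fields on
`M₁`, `VF₂` that of sections of `F⁻¹TM₂`, `C` the ring of smooth functions on `M₁` with
`D X` the derivation by the vector field `X`, `g₁, g₂` the (symmetric, bilinear) metrics,
`nab1` the Levi-Civita connection of `g₁` (metric-compatible), `nabF` the pullback
connection (metric-compatible for `g₂`), `Hor = Γ((ker F_*)^⊥)`, and `Fstar = F_*`; the
Riemannian-map property is `g₂(F_*X, F_*Z) = g₁(X, Z)` whenever `Z` is horizontal
(for vertical components of `X` both sides vanish), and the second fundamental form is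
symmetric. -/
theorem sff_range_perp
    {C : Type*} [CommRing C]
    {VF₁ VF₂ : Type*} [AddCommGroup VF₁] [Module ℝ VF₁] [AddCommGroup VF₂] [Module ℝ VF₂]
    (g₁ : VF₁ → VF₁ → C) (g₂ : VF₂ → VF₂ → C)
    (Fstar : VF₁ →ₗ[ℝ] VF₂)
    (D : VF₁ → C → C)
    (nab1 : VF₁ → VF₁ → VF₁) (nabF : VF₁ → VF₂ → VF₂)
    (Hor : Submodule ℝ VF₁)
    (hg₁symm : ∀ x y, g₁ x y = g₁ y x)
    (hg₂symm : ∀ s t, g₂ s t = g₂ t s)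
    (hg₂addl : ∀ s t u, g₂ (s + t) u = g₂ s u + g₂ t u)
    (hg₂negl : ∀ s u, g₂ (-s) u = -g₂ s u)
    (hg₂subl : ∀ s t u, g₂ (s - t) u = g₂ s u - g₂ t u)
    -- the Riemannian-map property of `F`
    (hriem : ∀ x : VF₁, ∀ z ∈ Hor, g₂ (Fstar x) (Fstar z) = g₁ x z)
    -- metric compatibility of the Levi-Civita connection of `M₁`
    (hcomp1 : ∀ x y z, D x (g₁ y z) = g₁ (nab1 x y) z + g₁ y (nab1 x z))
    -- metric compatibility of the pullback connection
    (hcompF : ∀ x s t, D x (g₂ s t) = g₂ (nabF x s) t + g₂ s (nabF x t))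
    -- symmetry of the second fundamental form of `F`
    (hsffsymm : ∀ x y, nabF x (Fstar y) - Fstar (nab1 x y)
        = nabF y (Fstar x) - Fstar (nab1 y x)) :
    ∀ x ∈ Hor, ∀ y ∈ Hor, ∀ z ∈ Hor,
      g₂ (nabF x (Fstar y) - Fstar (nab1 x y)) (Fstar z) = 0 :=
  sff_range_perp_general g₁ g₂ Fstar D nab1 nabF Hor hg₁symm hg₂symm hg₂addl hg₂subl hriem hcomp1
    hcompF hsffsymm
end

section
/- Let F be a Riemannian map from an almost Hermitian manifold (M₁,g₁,J) to a Riemannian manifold (M₂,g₂), and for X ∈ ker F_* write JX = φX + ωX with φX the component in ker F_* and ωX the orthogonal component. Then F is a slant Riemannian map (the angle θ(X) between JX and ker F_* is constant) if and only if there exists a constant λ ∈ [−1,0] such that φ²X = λX for all X ∈ Γ(ker F_*); in that case λ = −cos²θ where θ is the slant angle. -/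
/-!
Since the orthogonal projection onto `ker F` is self-adjoint and `J` is skew-adjoint
(`J² = -1` and `J` is an isometry), `φ` is skew-adjoint on `ker F`. For a skew-adjoint
operator, `φ² = λ` on a subspace is equivalent, by polarization, to `‖φ x‖² = -λ ‖x‖²` there.
As `‖J x‖ = ‖x‖`, the slant condition with angle `θ` amounts to `‖φ x‖ = cos θ ‖x‖`.
-/

open scoped RealInnerProductSpace

theorem cos_arccos_div_mul_eq {a b : ℝ} (ha : 0 ≤ a) (hab : a ≤ b) :
    Real.cos (Real.arccos (a / b)) * b = a := by
  rcases (ha.trans hab).eq_or_lt with hb | hb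
  · subst hb
    simp [le_antisymm hab ha]
  · rw [Real.cos_arccos (by linarith [div_nonneg ha hb.le]) ((div_le_one hb).mpr hab),
      div_mul_cancel₀ a hb.ne']

theorem div_eq_sqrt_of_sq_eq_mul_sq {a b μ : ℝ} (ha : 0 ≤ a) (hb : 0 < b)
    (h : a ^ 2 = μ * b ^ 2) : a / b = √μ := by
  have hsq : (a / b) ^ 2 = μ := by
    rw [div_pow, h]
    field_simp
  rw [← hsq, Real.sqrt_sq (div_nonneg ha hb.le)]

section

variable {V : Type*} [NormedAddCommGroup V] [InnerProductSpace ℝ V]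

theorem inner_map_map_of_norm_map_sq {K : Submodule ℝ V} {A : V →ₗ[ℝ] V} {c : ℝ}
    (hA : ∀ x ∈ K, ‖A x‖ ^ 2 = c * ‖x‖ ^ 2) {x y : V} (hx : x ∈ K) (hy : y ∈ K) :
    ⟪A x, A y⟫ = c * ⟪x, y⟫ := by
  have hxy := hA (x + y) (K.add_mem hx hy)
  rw [map_add, norm_add_sq_real, norm_add_sq_real, hA x hx, hA y hy] at hxy
  linarith

theorem map_map_eq_smul_iff_norm_map_sq {K : Submodule ℝ V} {A : V →ₗ[ℝ] V}
    (hAK : ∀ x ∈ K, A x ∈ K) (hskew : ∀ x ∈ K, ∀ y ∈ K, ⟪A x, y⟫ = -⟪x, A y⟫) (c : ℝ) :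
    (∀ x ∈ K, A (A x) = c • x) ↔ ∀ x ∈ K, ‖A x‖ ^ 2 = -c * ‖x‖ ^ 2 := by
  constructor
  · intro h x hx
    rw [← real_inner_self_eq_norm_sq, ← real_inner_self_eq_norm_sq,
      hskew x hx (A x) (hAK x hx), h x hx, real_inner_smul_right]
    ring
  · intro h x hx
    have hw : A (A x) - c • x ∈ K := K.sub_mem (hAK _ (hAK x hx)) (K.smul_mem c hx)
    have horth : ∀ y ∈ K, ⟪A (A x) - c • x, y⟫ = 0 := fun y hy => by
      rw [inner_sub_left, hskew _ (hAK x hx) y hy, inner_map_map_of_norm_map_sq h hx hy,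
        real_inner_smul_left]
      ring
    exact sub_eq_zero.mp (inner_self_eq_zero.mp (horth _ hw))

theorem inner_map_left_eq_neg_of_map_map_eq_neg {J : V →ₗ[ℝ] V} (hJ2 : ∀ x, J (J x) = -x)
    (hJ : ∀ x y, ⟪J x, J y⟫ = ⟪x, y⟫) (x y : V) : ⟪J x, y⟫ = -⟪x, J y⟫ := by
  have h := hJ x (J y)
  rw [hJ2, inner_neg_right] at h
  linarith

theorem norm_map_eq_of_inner_map_map {J : V →ₗ[ℝ] V} (hJ : ∀ x y, ⟪J x, J y⟫ = ⟪x, y⟫)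
    (x : V) : ‖J x‖ = ‖x‖ :=
  (J.isometryOfInner hJ).norm_map x

section TangentialPart

variable (K : Submodule ℝ V) [K.HasOrthogonalProjection] (J : V →ₗ[ℝ] V)

/-- The component `φ` of `J` along `K` in the splitting `J x = φ x + ω x`. -/
noncomputable def tangentialPart : V →ₗ[ℝ] V := (K.starProjection : V →ₗ[ℝ] V) ∘ₗ J

variable {K J}

theorem tangentialPart_apply (x : V) : tangentialPart K J x = K.starProjection (J x) := rfl

theorem tangentialPart_mem (x : V) : tangentialPart K J x ∈ K :=
  K.starProjection_apply_mem (J x)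

theorem inner_tangentialPart_left_of_mem (x : V) {y : V} (hy : y ∈ K) :
    ⟪tangentialPart K J x, y⟫ = ⟪J x, y⟫ := by
  rw [tangentialPart_apply, K.inner_starProjection_left_eq_right,
    K.starProjection_eq_self_iff.mpr hy]

theorem inner_tangentialPart_right_of_mem {x : V} (hx : x ∈ K) (y : V) :
    ⟪x, tangentialPart K J y⟫ = ⟪x, J y⟫ := by
  rw [real_inner_comm, inner_tangentialPart_left_of_mem y hx, real_inner_comm]

theorem inner_tangentialPart_left_eq_neg (hJ2 : ∀ x, J (J x) = -x)
    (hJ : ∀ x y, ⟪J x, J y⟫ = ⟪x, y⟫) {x y : V} (hx : x ∈ K) (hy : y ∈ K) :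
    ⟪tangentialPart K J x, y⟫ = -⟪x, tangentialPart K J y⟫ := by
  rw [inner_tangentialPart_left_of_mem x hy, inner_map_left_eq_neg_of_map_map_eq_neg hJ2 hJ,
    inner_tangentialPart_right_of_mem hx]

theorem norm_tangentialPart_le (hJ : ∀ x y, ⟪J x, J y⟫ = ⟪x, y⟫) (x : V) :
    ‖tangentialPart K J x‖ ≤ ‖x‖ :=
  (K.norm_starProjection_apply_le (J x)).trans_eq (norm_map_eq_of_inner_map_map hJ x)

theorem norm_tangentialPart_eq_cos_mul (hJ : ∀ x y, ⟪J x, J y⟫ = ⟪x, y⟫) {θ : ℝ}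
    (hθ : ∀ x ∈ K, x ≠ 0 → Real.arccos (‖tangentialPart K J x‖ / ‖J x‖) = θ)
    {x : V} (hx : x ∈ K) : ‖tangentialPart K J x‖ = Real.cos θ * ‖x‖ := by
  rcases eq_or_ne x 0 with rfl | hx0
  · simp
  · rw [← hθ x hx hx0, norm_map_eq_of_inner_map_map hJ,
      cos_arccos_div_mul_eq (norm_nonneg _) (norm_tangentialPart_le hJ x)]

theorem arccos_norm_tangentialPart_div_eq (hJ : ∀ x y, ⟪J x, J y⟫ = ⟪x, y⟫) {μ : ℝ}
    (h : ∀ x ∈ K, ‖tangentialPart K J x‖ ^ 2 = μ * ‖x‖ ^ 2) {x : V} (hx : x ∈ K)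
    (hx0 : x ≠ 0) : Real.arccos (‖tangentialPart K J x‖ / ‖J x‖) = Real.arccos √μ := by
  rw [norm_map_eq_of_inner_map_map hJ,
    div_eq_sqrt_of_sq_eq_mul_sq (norm_nonneg _) (norm_pos_iff.mpr hx0) (h x hx)]

end TangentialPart

end

theorem slant_riemannian_map_characterization_general
    {V₁ V₂ : Type*} [NormedAddCommGroup V₁] [InnerProductSpace ℝ V₁] [FiniteDimensional ℝ V₁]
    [NormedAddCommGroup V₂] [InnerProductSpace ℝ V₂]
    (F : V₁ →ₗ[ℝ] V₂)
    (J : V₁ →ₗ[ℝ] V₁)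
    (hJ2 : ∀ x : V₁, J (J x) = -x)
    (hJiso : ∀ x y : V₁, ⟪J x, J y⟫ = ⟪x, y⟫)
    (φ : V₁ → V₁)
    (hφ : ∀ x : V₁, φ x = ((Submodule.orthogonalProjectionOnto (LinearMap.ker F) (J x) : LinearMap.ker F) : V₁)) :
    ((∃ θ : ℝ, ∀ x ∈ LinearMap.ker F, x ≠ 0 →
        Real.arccos (‖φ x‖ / ‖J x‖) = θ) ↔
      (∃ lam ∈ Set.Icc (-1 : ℝ) 0, ∀ x ∈ LinearMap.ker F, φ (φ x) = lam • x)) ∧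
    (∀ θ : ℝ, (∀ x ∈ LinearMap.ker F, x ≠ 0 → Real.arccos (‖φ x‖ / ‖J x‖) = θ) →
      ∀ x ∈ LinearMap.ker F, φ (φ x) = -(Real.cos θ) ^ 2 • x) := by
  set K := LinearMap.ker F
  obtain rfl : φ = tangentialPart K J := funext hφ
  have hsq_iff := map_map_eq_smul_iff_norm_map_sq (K := K) (fun x _ => tangentialPart_mem x)
    (fun _ hx _ hy => inner_tangentialPart_left_eq_neg hJ2 hJiso hx hy)
  have slant_sq (θ : ℝ)
      (hθ : ∀ x ∈ K, x ≠ 0 → Real.arccos (‖tangentialPart K J x‖ / ‖J x‖) = θ) :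
      ∀ x ∈ K, tangentialPart K J (tangentialPart K J x) = -(Real.cos θ) ^ 2 • x :=
    (hsq_iff _).mpr fun x hx => by rw [norm_tangentialPart_eq_cos_mul hJiso hθ hx]; ring
  refine ⟨⟨?_, ?_⟩, slant_sq⟩
  · rintro ⟨θ, hθ⟩
    exact ⟨-(Real.cos θ) ^ 2, ⟨neg_le_neg (Real.cos_sq_le_one θ), neg_nonpos.mpr (sq_nonneg _)⟩,
      slant_sq θ hθ⟩
  · rintro ⟨lam, -, hlam⟩
    exact ⟨_, fun x hx hx0 =>
      arccos_norm_tangentialPart_div_eq hJiso ((hsq_iff lam).mp hlam) hx hx0⟩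

/-- Theorem 3.1: for a Riemannian map `F` from an almost Hermitian space
(here modelled pointwise by its differential, a linear map whose restriction to
`(ker F)ᗮ` is an isometry) with `φ x = P_{ker F}(J x)` for vertical `x`, `F` is slant
(the angle `θ(x)` between `J x` and `ker F` is a constant) iff there is `λ ∈ [−1,0]`
with `φ² = λ·Id` on `ker F`; and if `F` is slant with angle `θ` then `λ = −cos²θ`. -/
theorem slant_riemannian_map_characterization
    {V₁ V₂ : Type*} [NormedAddCommGroup V₁] [InnerProductSpace ℝ V₁] [FiniteDimensional ℝ V₁]
    [NormedAddCommGroup V₂] [InnerProductSpace ℝ V₂] [FiniteDimensional ℝ V₂]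
    (F : V₁ →ₗ[ℝ] V₂)
    (hriem : ∀ x ∈ (LinearMap.ker F)ᗮ, ∀ y ∈ (LinearMap.ker F)ᗮ, ⟪F x, F y⟫ = ⟪x, y⟫)
    (J : V₁ →ₗ[ℝ] V₁)
    (hJ2 : ∀ x : V₁, J (J x) = -x)
    (hJiso : ∀ x y : V₁, ⟪J x, J y⟫ = ⟪x, y⟫)
    (φ : V₁ → V₁)
    (hφ : ∀ x : V₁, φ x = ((Submodule.orthogonalProjectionOnto (LinearMap.ker F) (J x) : LinearMap.ker F) : V₁)) :
    ((∃ θ : ℝ, ∀ x ∈ LinearMap.ker F, x ≠ 0 →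
        Real.arccos (‖φ x‖ / ‖J x‖) = θ) ↔
      (∃ lam ∈ Set.Icc (-1 : ℝ) 0, ∀ x ∈ LinearMap.ker F, φ (φ x) = lam • x)) ∧
    (∀ θ : ℝ, (∀ x ∈ LinearMap.ker F, x ≠ 0 → Real.arccos (‖φ x‖ / ‖J x‖) = θ) →
      ∀ x ∈ LinearMap.ker F, φ (φ x) = -(Real.cos θ) ^ 2 • x) :=
  slant_riemannian_map_characterization_general F J hJ2 hJiso φ hφ
end

section
/- Let V be a real inner product space with a compatible complex structure J (J² = −Id, ⟨JX,JY⟩ = ⟨X,Y⟩), and let W ⊂ V be a subspace with orthogonal projection P onto W. Define φ: W → W by φX = P(JX). If there is λ ∈ [−1,0] with φ² = λ·Id_W, then for every nonzero X ∈ W the angle θ(X) between JX and W satisfies cos²θ(X) = −λ; in particular the angle is constant on W. -/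
/-! A complex structure compatible with the metric is skew-adjoint and the projection `P` is
self-adjoint, so for `x ∈ W` we get `‖P (J x)‖² = ⟪J x, P (J x)⟫ = -⟪x, P (J (P (J x)))⟫ = -⟪x, φ² x⟫
= -λ ‖x‖²`, while `‖J x‖ = ‖x‖`. As `P` is a contraction, the ratio `‖P (J x)‖ / ‖J x‖` lies in `[0, 1]`,
where `cos ∘ arccos` is the identity. -/

open scoped RealInnerProductSpace

section SkewOperator

variable {V : Type*} [NormedAddCommGroup V] [InnerProductSpace ℝ V]

theorem inner_apply_left_eq_neg_inner_apply_right {J : V → V} (hJ2 : ∀ x, J (J x) = -x)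
    (hJiso : ∀ x y, ⟪J x, J y⟫ = ⟪x, y⟫) (x y : V) : ⟪J x, y⟫ = -⟪x, J y⟫ := by
  rw [← hJiso, hJ2, inner_neg_left]

theorem norm_apply_eq_of_inner_apply {J : V → V} (hJiso : ∀ x y, ⟪J x, J y⟫ = ⟪x, y⟫) (x : V) :
    ‖J x‖ = ‖x‖ := by
  rw [norm_eq_sqrt_real_inner, norm_eq_sqrt_real_inner, hJiso]

theorem Submodule.norm_sq_starProjection_apply_of_skew (W : Submodule ℝ V)
    [W.HasOrthogonalProjection] {J : V → V} (hJ : ∀ x y, ⟪J x, y⟫ = -⟪x, J y⟫)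
    {x : V} (hx : x ∈ W) :
    ‖W.starProjection (J x)‖ ^ 2 = -⟪x, W.starProjection (J (W.starProjection (J x)))⟫ := by
  set p := W.starProjection (J x)
  calc ‖p‖ ^ 2 = ⟪J x, p⟫ := by
        rw [real_inner_comm]; exact (W.re_inner_starProjection_eq_normSq (J x)).symm
    _ = -⟪W.starProjection x, J p⟫ := by rw [hJ, W.starProjection_eq_self_iff.mpr hx]
    _ = -⟪x, W.starProjection (J p)⟫ := by rw [W.inner_starProjection_left_eq_right]

end SkewOperator

theorem slant_angle_of_phi_sq_eq_smul_general
    {V : Type*} [NormedAddCommGroup V] [InnerProductSpace ℝ V] [FiniteDimensional ℝ V]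
    (J : V →ₗ[ℝ] V)
    (hJ2 : ∀ x : V, J (J x) = -x)
    (hJiso : ∀ x y : V, ⟪J x, J y⟫ = ⟪x, y⟫)
    (W : Submodule ℝ V)
    (φ : V → V)
    (hφ : ∀ x : V, φ x = ((W.orthogonalProjectionOnto (J x) : W) : V))
    (lam : ℝ)
    (hφ2 : ∀ x ∈ W, φ (φ x) = lam • x) :
    ∀ x ∈ W, x ≠ 0 →
      (Real.cos (Real.arccos
        (‖((W.orthogonalProjectionOnto (J x) : W) : V)‖ / ‖J x‖))) ^ 2 = -lam := by
  intro x hx hx0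
  simp only [Submodule.coe_orthogonalProjectionOnto_apply] at hφ ⊢
  have hnorm : ‖J x‖ = ‖x‖ := norm_apply_eq_of_inner_apply hJiso x
  have hproj : ‖W.starProjection (J x)‖ ^ 2 = -lam * ‖x‖ ^ 2 := by
    rw [W.norm_sq_starProjection_apply_of_skew
      (inner_apply_left_eq_neg_inner_apply_right hJ2 hJiso) hx, ← hφ, ← hφ, hφ2 x hx,
      real_inner_smul_right, real_inner_self_eq_norm_sq, neg_mul]
  have hle : ‖W.starProjection (J x)‖ / ‖J x‖ ≤ 1 :=
    div_le_one_of_le₀ (W.norm_starProjection_apply_le _) (norm_nonneg _)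
  have hge : -1 ≤ ‖W.starProjection (J x)‖ / ‖J x‖ := by
    linarith [div_nonneg (norm_nonneg (W.starProjection (J x))) (norm_nonneg (J x))]
  rw [Real.cos_arccos hge hle, div_pow, hproj, hnorm]
  field_simp [norm_ne_zero_iff.mpr hx0]

/-- pointwise slant characterization, direction "φ² = λ·Id ⇒ constant angle
with cos²θ = −λ". The angle between `J x` and `W` is `arccos (‖P(Jx)‖ / ‖Jx‖)`. -/
theorem slant_angle_of_phi_sq_eq_smul
    {V : Type*} [NormedAddCommGroup V] [InnerProductSpace ℝ V] [FiniteDimensional ℝ V]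
    (J : V →ₗ[ℝ] V)
    (hJ2 : ∀ x : V, J (J x) = -x)
    (hJiso : ∀ x y : V, ⟪J x, J y⟫ = ⟪x, y⟫)
    (W : Submodule ℝ V)
    (φ : V → V)
    (hφ : ∀ x : V, φ x = ((W.orthogonalProjectionOnto (J x) : W) : V))
    (lam : ℝ) (hlam : lam ∈ Set.Icc (-1 : ℝ) 0)
    (hφ2 : ∀ x ∈ W, φ (φ x) = lam • x) :
    ∀ x ∈ W, x ≠ 0 →
      (Real.cos (Real.arccos
        (‖((W.orthogonalProjectionOnto (J x) : W) : V)‖ / ‖J x‖))) ^ 2 = -lam :=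
  slant_angle_of_phi_sq_eq_smul_general J hJ2 hJiso W φ hφ lam hφ2
end

section
/- Let V be a real inner product space with a compatible complex structure J and W a subspace that is slant with angle θ ∈ (0, π/2], with ω: W → W^⊥ given by ωX = JX − φX. Then the subspace W ⊕ ω(W) of V is invariant under J. -/
open scoped RealInnerProductSpace

/-!
Since `φ` takes values in `W`, each `ω X = J X - φ X` differs from `J X` by a vector of `W`, so
`W ⊕ ω(W)` is the subspace `W + J(W)`, which is `J`-invariant because `J² = -1` maps `J(W)` back
onto `W`.
-/

namespace Submodule

variable {R M : Type*} [Ring R] [AddCommGroup M] [Module R M]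

theorem sup_span_image_le_of_sub_mem {W : Submodule R M} {f g : M → M}
    (h : ∀ x ∈ W, f x - g x ∈ W) : W ⊔ span R (f '' W) ≤ W ⊔ span R (g '' W) := by
  refine sup_le le_sup_left (span_le.mpr ?_)
  rintro _ ⟨x, hx, rfl⟩
  rw [SetLike.mem_coe, ← sub_add_cancel (f x) (g x)]
  exact add_mem (mem_sup_left (h x hx)) (mem_sup_right (subset_span ⟨x, hx, rfl⟩))

theorem sup_span_image_eq_of_sub_mem {W : Submodule R M} {f g : M → M}
    (h : ∀ x ∈ W, f x - g x ∈ W) : W ⊔ span R (f '' W) = W ⊔ span R (g '' W) :=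
  le_antisymm (sup_span_image_le_of_sub_mem h)
    (sup_span_image_le_of_sub_mem fun x hx => neg_sub (f x) (g x) ▸ W.neg_mem (h x hx))

theorem sup_map_le_comap_of_apply_apply_eq_neg {J : M →ₗ[R] M} (hJ : ∀ x, J (J x) = -x)
    (W : Submodule R M) : W ⊔ W.map J ≤ (W ⊔ W.map J).comap J := by
  refine sup_le (fun x hx => mem_sup_right (mem_map_of_mem hx)) ?_
  rintro _ ⟨x, hx, rfl⟩
  rw [mem_comap, hJ]
  exact mem_sup_left (W.neg_mem hx)

end Submodule

theorem slant_W_oplus_omegaW_J_invariant_general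
    {V : Type*} [NormedAddCommGroup V] [InnerProductSpace ℝ V] [FiniteDimensional ℝ V]
    (J : V →ₗ[ℝ] V)
    (hJ2 : ∀ x : V, J (J x) = -x)
    (W : Submodule ℝ V)
    (φ ω : V → V)
    (hφ : ∀ x : V, φ x = ((W.orthogonalProjectionOnto (J x) : W) : V))
    (hω : ∀ x : V, ω x = J x - φ x) :
    ∀ v ∈ W ⊔ Submodule.span ℝ (ω '' (W : Set V)),
      J v ∈ W ⊔ Submodule.span ℝ (ω '' (W : Set V)) := by
  have hφW : ∀ x, φ x ∈ W := fun x => hφ x ▸ (W.orthogonalProjectionOnto (J x)).2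
  have hsup : W ⊔ Submodule.span ℝ (ω '' W) = W ⊔ W.map J := by
    rw [Submodule.sup_span_image_eq_of_sub_mem (g := J) fun x _ => ?_, Submodule.span_image,
      Submodule.span_eq]
    rw [hω, sub_sub_cancel_left]
    exact W.neg_mem (hφW x)
  rw [hsup]
  exact fun v hv => Submodule.sup_map_le_comap_of_apply_apply_eq_neg hJ2 W hv

/-- for a slant subspace `W` with slant angle `θ ∈ (0, π/2]`, where
`φ x = P_W (J x)` and `ω x = J x − φ x`, the subspace `W ⊕ ω(W)` of `V` is `J`-invariant. -/
theorem slant_W_oplus_omegaW_J_invariant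
    {V : Type*} [NormedAddCommGroup V] [InnerProductSpace ℝ V] [FiniteDimensional ℝ V]
    (J : V →ₗ[ℝ] V)
    (hJ2 : ∀ x : V, J (J x) = -x)
    (hJiso : ∀ x y : V, ⟪J x, J y⟫ = ⟪x, y⟫)
    (W : Submodule ℝ V)
    (φ ω : V → V)
    (hφ : ∀ x : V, φ x = ((W.orthogonalProjectionOnto (J x) : W) : V))
    (hω : ∀ x : V, ω x = J x - φ x)
    (θ : ℝ) (hθ : θ ∈ Set.Ioc 0 (Real.pi / 2))
    (hφ2 : ∀ x ∈ W, φ (φ x) = -(Real.cos θ) ^ 2 • x) :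
    ∀ v ∈ W ⊔ Submodule.span ℝ (ω '' (W : Set V)),
      J v ∈ W ⊔ Submodule.span ℝ (ω '' (W : Set V)) :=
  slant_W_oplus_omegaW_J_invariant_general J hJ2 W φ ω hφ hω
end

section
/- Let F be a slant Riemannian map with slant angle θ from a Kähler manifold (M₁,g₁,J) to a Riemannian manifold (M₂,g₂). If ω is parallel with respect to the Levi-Civita connection on ker F_* (i.e., (∇_X ω)Y = 0 for all vertical X,Y), then 𝒯_{φX} φX = −cos²θ · 𝒯_X X for every X ∈ Γ(ker F_*). -/
/-!
Parallelism of `ω` combined with `∇J = 0` gives `𝒯_X φY = ℋ J (𝒯_X Y)` for vertical `X, Y`.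
Applying this twice around the symmetry of `𝒯` on vertical vectors,
`𝒯_{φX} φX = ℋ J 𝒯_{φX} X = ℋ J 𝒯_X φX = 𝒯_X φ²X`, and the slant condition
`φ²X = −cos²θ · X` finishes the proof.
-/

/-- The O'Neill tensor `𝒯_E G = ℋ∇_{𝒱E}𝒱G + 𝒱∇_{𝒱E}ℋG`. -/
def oneillT {VF : Type*} [AddCommGroup VF] [Module ℝ VF]
    (vP hP : VF →ₗ[ℝ] VF) (nab : VF → VF → VF) (e g : VF) : VF :=
  hP (nab (vP e) (vP g)) + vP (nab (vP e) (hP g))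

section OneillT

variable {VF : Type*} [AddCommGroup VF] [Module ℝ VF] {vP hP : VF →ₗ[ℝ] VF}
  {nab : VF → VF → VF}

lemma oneillT_smul_right (hnabsmul : ∀ x (c : ℝ) y, nab x (c • y) = c • nab x y)
    (e g : VF) (c : ℝ) : oneillT vP hP nab e (c • g) = c • oneillT vP hP nab e g := by
  simp only [oneillT, map_smul, hnabsmul, smul_add]

lemma oneillT_of_vertical (hhv : ∀ w, hP (vP w) = 0)
    (hnabadd : ∀ x y z, nab x (y + z) = nab x y + nab x z)
    {a b : VF} (ha : vP a = a) (hb : vP b = b) :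
    oneillT vP hP nab a b = hP (nab a b) := by
  have hhb : hP b = 0 := by rw [← hb, hhv]
  have hnab0 : nab a 0 = 0 := map_zero (AddMonoidHom.mk' (nab a) (hnabadd a))
  rw [oneillT, ha, hb, hhb, hnab0, map_zero, add_zero]

lemma oneillT_vP_J_right (hsum : ∀ w, vP w + hP w = w) (hvv : ∀ w, vP (vP w) = vP w)
    (hhv : ∀ w, hP (vP w) = 0)
    {J : VF →ₗ[ℝ] VF} (hnabadd : ∀ x y z, nab x (y + z) = nab x y + nab x z)
    (hkaehler : ∀ x y, nab x (J y) = J (nab x y))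
    (hpar : ∀ x y, vP x = x → vP y = y →
        hP (nab x (hP (J y))) = hP (J (vP (nab x y))))
    {a b : VF} (ha : vP a = a) (hb : vP b = b) :
    oneillT vP hP nab a (vP (J b)) = hP (J (oneillT vP hP nab a b)) := by
  rw [oneillT_of_vertical hhv hnabadd ha (hvv _), oneillT_of_vertical hhv hnabadd ha hb]
  -- `J ∇_a b = ∇_a (φb) + ∇_a (ωb)`, and `ℋ∇_a (ωb) = ω(𝒱∇_a b)` by parallelism of `ω`
  have hJb : vP (J b) = J b - hP (J b) := eq_sub_of_add_eq (hsum _)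
  have hsplit : hP (J (nab a b)) = hP (J (vP (nab a b))) + hP (J (hP (nab a b))) := by
    rw [← map_add, ← map_add, hsum]
  have hnab_sub : nab a (J b - hP (J b)) = nab a (J b) - nab a (hP (J b)) :=
    map_sub (AddMonoidHom.mk' (nab a) (hnabadd a)) _ _
  rw [hJb, hnab_sub, map_sub, hkaehler, hpar a b ha hb, hsplit, add_sub_cancel_left]

end OneillT

theorem T_phiX_phiX_of_omega_parallel_general
    {VF : Type*} [AddCommGroup VF] [Module ℝ VF]
    (J : VF →ₗ[ℝ] VF)
    (vP hP : VF →ₗ[ℝ] VF)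
    (hsum : ∀ w, vP w + hP w = w)
    (hvv : ∀ w, vP (vP w) = vP w)
    (hhv : ∀ w, hP (vP w) = 0)
    (nab : VF → VF → VF)
    (hnabadd : ∀ x y z, nab x (y + z) = nab x y + nab x z)
    (hnabsmul : ∀ x (c : ℝ) y, nab x (c • y) = c • nab x y)
    (hkaehler : ∀ x y, nab x (J y) = J (nab x y))
    (θ : ℝ)
    (hslant : ∀ x, vP x = x → vP (J (vP (J x))) = -(Real.cos θ) ^ 2 • x)
    -- `𝒯` is symmetric on vertical fields (since `ker F_*` is integrable)
    (hTsym : ∀ x y, vP x = x → vP y = y →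
        oneillT vP hP nab x y = oneillT vP hP nab y x)
    -- `ω` is parallel: `(∇_X ω)Y = 0` for vertical `X, Y`
    (hpar : ∀ x y, vP x = x → vP y = y →
        hP (nab x (hP (J y))) = hP (J (vP (nab x y)))) :
    ∀ x, vP x = x →
      oneillT vP hP nab (vP (J x)) (vP (J x))
        = -(Real.cos θ) ^ 2 • oneillT vP hP nab x x := by
  intro x hx
  have hφx : vP (vP (J x)) = vP (J x) := hvv _
  have hφ {a b : VF} := oneillT_vP_J_right (a := a) (b := b) hsum hvv hhv hnabadd hkaehler hpar
  calc oneillT vP hP nab (vP (J x)) (vP (J x))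
      = hP (J (oneillT vP hP nab (vP (J x)) x)) := hφ hφx hx
    _ = hP (J (oneillT vP hP nab x (vP (J x)))) := by rw [hTsym _ _ hφx hx]
    _ = oneillT vP hP nab x (vP (J (vP (J x)))) := (hφ hx hφx).symm
    _ = -(Real.cos θ) ^ 2 • oneillT vP hP nab x x := by
      rw [hslant x hx, oneillT_smul_right hnabsmul]

/-- Lemma 3.1: for a slant Riemannian map with slant angle `θ` from a
Kähler manifold (`∇J = 0`, slant condition `φ² = −cos²θ·id` on vertical fields), if `ω`
is parallel on `ker F_*` (i.e. `(∇_X ω)Y = ℋ∇_X(ωY) − ω(𝒱∇_X Y) = 0` for vertical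
`X, Y`), then `𝒯_{φX} φX = −cos²θ · 𝒯_X X` for every vertical `X`.  Here `φ = 𝒱 ∘ J`,
`ω = ℋ ∘ J` on vertical fields, `𝒯` is the (vertically symmetric, since `ker F_*` is
integrable) O'Neill tensor, and the connection is additive and `ℝ`-homogeneous in its
second argument. -/
theorem T_phiX_phiX_of_omega_parallel
    {VF : Type*} [AddCommGroup VF] [Module ℝ VF]
    (J : VF →ₗ[ℝ] VF) (hJ2 : ∀ w, J (J w) = -w)
    (vP hP : VF →ₗ[ℝ] VF)
    (hsum : ∀ w, vP w + hP w = w)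
    (hvv : ∀ w, vP (vP w) = vP w) (hhh : ∀ w, hP (hP w) = hP w)
    (hvh : ∀ w, vP (hP w) = 0) (hhv : ∀ w, hP (vP w) = 0)
    (nab : VF → VF → VF)
    (hnabadd : ∀ x y z, nab x (y + z) = nab x y + nab x z)
    (hnabsmul : ∀ x (c : ℝ) y, nab x (c • y) = c • nab x y)
    (hkaehler : ∀ x y, nab x (J y) = J (nab x y))
    (θ : ℝ)
    (hslant : ∀ x, vP x = x → vP (J (vP (J x))) = -(Real.cos θ) ^ 2 • x)
    -- `𝒯` is symmetric on vertical fields (since `ker F_*` is integrable)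
    (hTsym : ∀ x y, vP x = x → vP y = y →
        oneillT vP hP nab x y = oneillT vP hP nab y x)
    -- `ω` is parallel: `(∇_X ω)Y = 0` for vertical `X, Y`
    (hpar : ∀ x y, vP x = x → vP y = y →
        hP (nab x (hP (J y))) = hP (J (vP (nab x y)))) :
    ∀ x, vP x = x →
      oneillT vP hP nab (vP (J x)) (vP (J x))
        = -(Real.cos θ) ^ 2 • oneillT vP hP nab x x :=
  T_phiX_phiX_of_omega_parallel_general J vP hP hsum hvv hhv nab hnabadd hnabsmul hkaehler θ hslant
    hTsym hpar
end
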